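/- Suppose the symmetric 3-tensor T satisfies condition (Γ). Then ‖T‖_Fr² ≤ τ² tr(Γ²) tr(Γ⁴), where ‖T‖_Fr² = ∑_{i,j,k=1}^p T_{i,j,k}². -/

import Mathlib

open Matrix Finset

noncomputable def euclNorm {p : ℕ} (v : Fin p → ℝ) : ℝ := Real.sqrt (∑ i, v i ^ 2)

/-!
The key step is polarization with constant one: `|T(u)| ≤ τ‖Γu‖³` for all `u` implies
`|T(u, v, v)| ≤ τ‖Γu‖‖Γv‖²`. After replacing `Γ²` by the definite `Γ² + ε` (and letting `ε → 0`),
complete `v` to an orthonormal basis `v, w` of the plane of `u` and `v` for `⟨x, y⟩ = xᵀΓ²y`, so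
that `u = c v + s w` with `c² + s² = 1`. Then `T(u, v, v) = c T(v, v, v) + s T(v, v, w)` is a convex
combination of the values of the cubic `T` at the three cube roots of `c + i s`, read in the
coordinates `v, w`, hence is at most `τ` in absolute value.

With `u = eᵢ` this bounds the quadratic form of the slice `Tᵢ = T(eᵢ, ·, ·)` by `τ‖Γeᵢ‖` times
that of `Γ²`. Diagonalising `Tᵢ` and using Cauchy–Schwarz on each eigenvector gives
`‖Tᵢ‖²_Fr ≤ τ²‖Γeᵢ‖²‖Γ²‖²_Fr`, and summing over `i` gives `τ² tr(Γ²) tr(Γ⁴)`.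
-/

open Filter Topology

def binaryCubic (A B C D : ℝ) (p : ℝ × ℝ) : ℝ :=
  A * p.1 ^ 3 + 3 * B * p.1 ^ 2 * p.2 + 3 * C * p.1 * p.2 ^ 2 + D * p.2 ^ 3

lemma exists_cube_root_of_sq_add_sq_eq_one {c s : ℝ} (h : c ^ 2 + s ^ 2 = 1) :
    ∃ a b : ℝ, a ^ 2 + b ^ 2 = 1 ∧ c = a ^ 3 - 3 * a * b ^ 2 ∧ s = 3 * a ^ 2 * b - b ^ 3 := by
  obtain ⟨z, hz⟩ := IsAlgClosed.exists_pow_nat_eq (⟨c, s⟩ : ℂ) three_pos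
  have hc : c = z.re ^ 3 - 3 * z.re * z.im ^ 2 := by
    have := congrArg Complex.re hz
    simp only [pow_three, Complex.mul_re, Complex.mul_im] at this
    linear_combination -this
  have hs : s = 3 * z.re ^ 2 * z.im - z.im ^ 3 := by
    have := congrArg Complex.im hz
    simp only [pow_three, Complex.mul_re, Complex.mul_im] at this
    linear_combination -this
  refine ⟨z.re, z.im, ?_, hc, hs⟩
  rw [← pow_eq_one_iff_of_nonneg (by positivity) three_ne_zero, ← h, hc, hs]
  ring

/- For `a + i b = e^{iθ}` the nodes are the three cube roots of `e^{3iθ}`, and the weight of the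
node `(cos φ, sin φ)` is `(sin 3φ / (3 sin φ)) ^ 2`. -/
noncomputable def cubeRootNodes (a b : ℝ) : Fin 3 → ℝ × ℝ :=
  ![(a, b), (-a / 2 - √3 * b / 2, √3 * a / 2 - b / 2), (-a / 2 + √3 * b / 2, -√3 * a / 2 - b / 2)]

noncomputable def quadratureWeight (p : ℝ × ℝ) : ℝ := (3 * p.1 ^ 2 - p.2 ^ 2) ^ 2 / 9

lemma cubeRootNodes_sq_add_sq (a b : ℝ) (k : Fin 3) :
    (cubeRootNodes a b k).1 ^ 2 + (cubeRootNodes a b k).2 ^ 2 = a ^ 2 + b ^ 2 := by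
  have h3 : √3 ^ 2 = 3 := Real.sq_sqrt (by norm_num)
  fin_cases k <;> simp [cubeRootNodes] <;> linear_combination (a ^ 2 + b ^ 2) / 4 * h3

lemma sum_quadratureWeight_cubeRootNodes (a b : ℝ) :
    ∑ k, quadratureWeight (cubeRootNodes a b k) = (a ^ 2 + b ^ 2) ^ 2 := by
  have h3 : √3 ^ 2 = 3 := Real.sq_sqrt (by norm_num)
  simp only [Fin.sum_univ_three, quadratureWeight, cubeRootNodes, cons_val_zero, cons_val_one,
    cons_val_two, head_cons, tail_cons]
  ring_nf
  simp only [show √3 ^ 4 = (√3 ^ 2) ^ 2 by ring, h3]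
  ring

lemma sum_quadratureWeight_mul_binaryCubic (A B C D a b : ℝ) :
    ∑ k, quadratureWeight (cubeRootNodes a b k) * binaryCubic A B C D (cubeRootNodes a b k) =
      (a ^ 2 + b ^ 2) ^ 2 * ((a ^ 3 - 3 * a * b ^ 2) * A + (3 * a ^ 2 * b - b ^ 3) * B) := by
  have h3 : √3 ^ 2 = 3 := Real.sq_sqrt (by norm_num)
  simp only [Fin.sum_univ_three, quadratureWeight, binaryCubic, cubeRootNodes, cons_val_zero,
    cons_val_one, cons_val_two, head_cons, tail_cons]
  -- the two rotated nodes are exchanged by `√3 ↦ -√3`, so only even powers of `√3` survive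
  ring_nf
  simp only [show √3 ^ 4 = (√3 ^ 2) ^ 2 by ring, show √3 ^ 6 = (√3 ^ 2) ^ 3 by ring, h3]
  ring

lemma abs_sum_mul_le_of_convex {ι : Type*} [Fintype ι] {w f : ι → ℝ} {τ : ℝ}
    (hw : ∀ k, 0 ≤ w k) (hw1 : ∑ k, w k = 1) (hf : ∀ k, |f k| ≤ τ) :
    |∑ k, w k * f k| ≤ τ :=
  calc |∑ k, w k * f k| ≤ ∑ k, w k * τ := by
        refine (abs_sum_le_sum_abs _ _).trans (sum_le_sum fun k _ => ?_)
        rw [abs_mul, abs_of_nonneg (hw k)]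
        exact mul_le_mul_of_nonneg_left (hf k) (hw k)
    _ = τ := by rw [← sum_mul, hw1, one_mul]

lemma abs_mul_add_mul_le_of_abs_binaryCubic_le {A B C D τ : ℝ}
    (h : ∀ p : ℝ × ℝ, p.1 ^ 2 + p.2 ^ 2 = 1 → |binaryCubic A B C D p| ≤ τ)
    {c s : ℝ} (hcs : c ^ 2 + s ^ 2 = 1) : |c * A + s * B| ≤ τ := by
  obtain ⟨a, b, hab, rfl, rfl⟩ := exists_cube_root_of_sq_add_sq_eq_one hcs
  have key := sum_quadratureWeight_mul_binaryCubic A B C D a b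
  rw [hab, one_pow, one_mul] at key
  rw [← key]
  refine abs_sum_mul_le_of_convex (fun k => by unfold quadratureWeight; positivity) ?_
    fun k => h _ ((cubeRootNodes_sq_add_sq a b k).trans hab)
  rw [sum_quadratureWeight_cubeRootNodes, hab, one_pow]

section Trilinear

variable {ι : Type*} [Fintype ι]

def IsSymmTensor (T : ι → ι → ι → ℝ) : Prop :=
  ∀ i j k, T i j k = T j i k ∧ T i j k = T i k j

def trilin (T : ι → ι → ι → ℝ) (u v w : ι → ℝ) : ℝ :=
  ∑ i, u i * (v ⬝ᵥ of (T i) *ᵥ w)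

variable {T : ι → ι → ι → ℝ}

@[simp] lemma trilin_add_left (u u' v w : ι → ℝ) :
    trilin T (u + u') v w = trilin T u v w + trilin T u' v w := by
  simp [trilin, add_mul, sum_add_distrib]

@[simp] lemma trilin_smul_left (r : ℝ) (u v w : ι → ℝ) :
    trilin T (r • u) v w = r * trilin T u v w := by
  simp [trilin, mul_sum, mul_assoc]

@[simp] lemma trilin_add_mid (u v v' w : ι → ℝ) :
    trilin T u (v + v') w = trilin T u v w + trilin T u v' w := by
  simp [trilin, add_dotProduct, mul_add, sum_add_distrib]

@[simp] lemma trilin_smul_mid (r : ℝ) (u v w : ι → ℝ) :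
    trilin T u (r • v) w = r * trilin T u v w := by
  simp [trilin, mul_sum, mul_left_comm]

@[simp] lemma trilin_add_right (u v w w' : ι → ℝ) :
    trilin T u v (w + w') = trilin T u v w + trilin T u v w' := by
  simp [trilin, mulVec_add, mul_add, sum_add_distrib]

@[simp] lemma trilin_smul_right (r : ℝ) (u v w : ι → ℝ) :
    trilin T u v (r • w) = r * trilin T u v w := by
  simp [trilin, mulVec_smul, mul_sum, mul_left_comm]

lemma trilin_eq_sum (u v w : ι → ℝ) :
    trilin T u v w = ∑ i, ∑ j, ∑ k, T i j k * u i * v j * w k := by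
  simp only [trilin, dotProduct, mulVec, of_apply, mul_sum]
  exact sum_congr rfl fun i _ => sum_congr rfl fun j _ => sum_congr rfl fun k _ => by ring

lemma trilin_single_left [DecidableEq ι] (i : ι) (v w : ι → ℝ) :
    trilin T (Pi.single i 1) v w = v ⬝ᵥ of (T i) *ᵥ w := by
  simp [trilin, Pi.single_apply]

lemma trilin_comm₁₂ (hT : IsSymmTensor T) (u v w : ι → ℝ) :
    trilin T u v w = trilin T v u w := by
  rw [trilin_eq_sum, trilin_eq_sum, sum_comm]
  exact sum_congr rfl fun i _ => sum_congr rfl fun j _ => sum_congr rfl fun k _ => by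
    rw [(hT j i k).1]; ring

lemma trilin_comm₂₃ (hT : IsSymmTensor T) (u v w : ι → ℝ) :
    trilin T u v w = trilin T u w v := by
  rw [trilin_eq_sum, trilin_eq_sum]
  refine sum_congr rfl fun i _ => ?_
  rw [sum_comm]
  exact sum_congr rfl fun j _ => sum_congr rfl fun k _ => by rw [(hT i k j).2]; ring

lemma trilin_add_smul_self (hT : IsSymmTensor T) (v w : ι → ℝ) (x y : ℝ) :
    trilin T (x • v + y • w) (x • v + y • w) (x • v + y • w) =
      binaryCubic (trilin T v v v) (trilin T v v w) (trilin T v w w) (trilin T w w w) (x, y) := by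
  have hvwv : trilin T v w v = trilin T v v w := trilin_comm₂₃ hT _ _ _
  have hwvv : trilin T w v v = trilin T v v w := by rw [trilin_comm₁₂ hT, hvwv]
  have hwvw : trilin T w v w = trilin T v w w := trilin_comm₁₂ hT _ _ _
  have hwwv : trilin T w w v = trilin T v w w := by rw [trilin_comm₂₃ hT, hwvw]
  simp only [trilin_add_left, trilin_add_mid, trilin_add_right, trilin_smul_left,
    trilin_smul_mid, trilin_smul_right, hvwv, hwvv, hwvw, hwwv, binaryCubic]
  ring

end Trilinear

section Polarization

variable {ι : Type*} [Fintype ι] {T : ι → ι → ι → ℝ} {B : Matrix ι ι ℝ} {τ : ℝ}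

lemma dotProduct_mulVec_comm_of_isSymm (hB : B.IsSymm) (u v : ι → ℝ) :
    u ⬝ᵥ B *ᵥ v = v ⬝ᵥ B *ᵥ u := by
  rw [dotProduct_mulVec, ← mulVec_transpose, hB.eq, dotProduct_comm]

lemma dotProduct_mulVec_smul_add_smul (hB : B.IsSymm) (v w : ι → ℝ) (x y : ℝ) :
    (x • v + y • w) ⬝ᵥ B *ᵥ (x • v + y • w) =
      x ^ 2 * (v ⬝ᵥ B *ᵥ v) + 2 * x * y * (v ⬝ᵥ B *ᵥ w) + y ^ 2 * (w ⬝ᵥ B *ᵥ w) := by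
  simp only [mulVec_add, mulVec_smul, dotProduct_add, add_dotProduct, dotProduct_smul,
    smul_dotProduct, smul_eq_mul, dotProduct_mulVec_comm_of_isSymm hB w v]
  ring

lemma smul_dotProduct_mulVec_smul (r : ℝ) (z : ι → ℝ) :
    (r • z) ⬝ᵥ B *ᵥ (r • z) = r ^ 2 * (z ⬝ᵥ B *ᵥ z) := by
  simp only [mulVec_smul, dotProduct_smul, smul_dotProduct, smul_eq_mul]
  ring

lemma abs_trilin_le_of_orthonormal (hT : IsSymmTensor T) (hB : B.IsSymm)
    (hcube : ∀ z, z ⬝ᵥ B *ᵥ z = 1 → |trilin T z z z| ≤ τ) {v w : ι → ℝ}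
    (hv : v ⬝ᵥ B *ᵥ v = 1) (hw : w ⬝ᵥ B *ᵥ w = 1) (hvw : v ⬝ᵥ B *ᵥ w = 0) {c s : ℝ}
    (hcs : c ^ 2 + s ^ 2 = 1) : |trilin T (c • v + s • w) v v| ≤ τ := by
  have hwvv : trilin T w v v = trilin T v v w := by
    rw [trilin_comm₁₂ hT, trilin_comm₂₃ hT]
  rw [trilin_add_left, trilin_smul_left, trilin_smul_left, hwvv]
  refine abs_mul_add_mul_le_of_abs_binaryCubic_le (C := trilin T v w w) (D := trilin T w w w)
    (fun p hp => ?_) hcs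
  rw [← trilin_add_smul_self hT]
  exact hcube _ (by rw [dotProduct_mulVec_smul_add_smul hB, hv, hvw, hw]; linear_combination hp)

lemma abs_trilin_le_of_posDef_of_eq_one (hT : IsSymmTensor T) (hB : B.PosDef)
    (hcube : ∀ z, z ⬝ᵥ B *ᵥ z = 1 → |trilin T z z z| ≤ τ) {u v : ι → ℝ}
    (hu : u ⬝ᵥ B *ᵥ u = 1) (hv : v ⬝ᵥ B *ᵥ v = 1) : |trilin T u v v| ≤ τ := by
  have hBs : B.IsSymm := isHermitian_iff_isSymm.1 hB.isHermitian
  set c := v ⬝ᵥ B *ᵥ u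
  set w' := u - c • v with hw'_def
  have hw'v : v ⬝ᵥ B *ᵥ w' = 0 := by
    rw [hw'_def, mulVec_sub, mulVec_smul, dotProduct_sub, dotProduct_smul, hv, smul_eq_mul,
      mul_one, sub_self]
  have hw' : w' ⬝ᵥ B *ᵥ w' = 1 - c ^ 2 := by
    have := dotProduct_mulVec_smul_add_smul hBs u v 1 (-c)
    simp only [one_smul, neg_smul, ← sub_eq_add_neg, hu, hv,
      dotProduct_mulVec_comm_of_isSymm hBs u v] at this
    rw [this]; ring
  have hc : 0 ≤ 1 - c ^ 2 := by
    simpa [hw'] using hB.posSemidef.dotProduct_mulVec_nonneg w'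
  set s := √(1 - c ^ 2)
  have hs2 : s ^ 2 = 1 - c ^ 2 := Real.sq_sqrt hc
  have hcs : c ^ 2 + s ^ 2 = 1 := by rw [hs2]; ring
  rcases eq_or_ne s 0 with hs | hs
  · have hw'0 : w' = 0 := by
      by_contra hne
      have := hB.dotProduct_mulVec_pos hne
      rw [star_trivial, hw'] at this
      linarith [Real.sqrt_eq_zero'.1 hs]
    have hc1 : |c| = 1 := by
      rw [← pow_eq_one_iff_of_nonneg (abs_nonneg c) two_ne_zero, sq_abs]
      simpa [hs] using hcs
    rw [sub_eq_zero.1 hw'0, trilin_smul_left, abs_mul, hc1, one_mul]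
    exact hcube v hv
  set w := s⁻¹ • w'
  have hvw : v ⬝ᵥ B *ᵥ w = 0 := by simp [w, mulVec_smul, hw'v]
  have hw : w ⬝ᵥ B *ᵥ w = 1 := by
    rw [smul_dotProduct_mulVec_smul, hw', ← hs2, inv_pow, inv_mul_cancel₀ (pow_ne_zero 2 hs)]
  have hu' : u = c • v + s • w := by simp [w, smul_smul, mul_inv_cancel₀ hs, w']
  rw [hu']
  exact abs_trilin_le_of_orthonormal hT hBs hcube hv hw hvw hcs

lemma abs_trilin_le_of_posDef (hT : IsSymmTensor T) (hB : B.PosDef)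
    (hcube : ∀ z, |trilin T z z z| ≤ τ * √(z ⬝ᵥ B *ᵥ z) ^ 3) (u v : ι → ℝ) :
    |trilin T u v v| ≤ τ * √(u ⬝ᵥ B *ᵥ u) * (v ⬝ᵥ B *ᵥ v) := by
  rcases eq_or_ne u 0 with rfl | hu
  · simp [trilin]
  rcases eq_or_ne v 0 with rfl | hv
  · simp [trilin]
  have hQpos : ∀ {z : ι → ℝ}, z ≠ 0 → 0 < z ⬝ᵥ B *ᵥ z := fun hz => by
    simpa using hB.dotProduct_mulVec_pos hz
  have hunit : ∀ {z : ι → ℝ}, z ≠ 0 →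
      (√(z ⬝ᵥ B *ᵥ z))⁻¹ • z ⬝ᵥ B *ᵥ ((√(z ⬝ᵥ B *ᵥ z))⁻¹ • z) = 1 := fun hz => by
    rw [smul_dotProduct_mulVec_smul, inv_pow, Real.sq_sqrt (hQpos hz).le,
      inv_mul_cancel₀ (hQpos hz).ne']
  have key := abs_trilin_le_of_posDef_of_eq_one hT hB
    (fun z hz => by simpa [hz] using hcube z) (hunit hu) (hunit hv)
  set α := √(u ⬝ᵥ B *ᵥ u)
  set β := √(v ⬝ᵥ B *ᵥ v)
  have hα : 0 < α := Real.sqrt_pos.2 (hQpos hu)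
  have hβ : 0 < β := Real.sqrt_pos.2 (hQpos hv)
  rw [trilin_smul_left, trilin_smul_mid, trilin_smul_right, abs_mul, abs_mul, abs_mul,
    abs_of_pos (inv_pos.2 hα), abs_of_pos (inv_pos.2 hβ)] at key
  rw [← Real.sq_sqrt (hQpos hv).le]
  calc |trilin T u v v| = α * β ^ 2 * (α⁻¹ * (β⁻¹ * (β⁻¹ * |trilin T u v v|))) := by
        field_simp
    _ ≤ α * β ^ 2 * τ := by gcongr
    _ = τ * α * β ^ 2 := by ring

theorem abs_trilin_le_of_posSemidef (hT : IsSymmTensor T) (hB : B.PosSemidef) (hτ : 0 ≤ τ)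
    (hcube : ∀ z, |trilin T z z z| ≤ τ * √(z ⬝ᵥ B *ᵥ z) ^ 3) (u v : ι → ℝ) :
    |trilin T u v v| ≤ τ * √(u ⬝ᵥ B *ᵥ u) * (v ⬝ᵥ B *ᵥ v) := by
  classical
  set f : ℝ → ℝ := fun ε =>
    τ * √(u ⬝ᵥ B *ᵥ u + ε * (u ⬝ᵥ u)) * (v ⬝ᵥ B *ᵥ v + ε * (v ⬝ᵥ v))
  have hf : Tendsto f (𝓝[>] 0) (𝓝 (f 0)) :=
    ((by fun_prop : Continuous f).tendsto 0).mono_left nhdsWithin_le_nhds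
  simp only [f, zero_mul, add_zero] at hf
  refine ge_of_tendsto hf (eventually_nhdsWithin_of_forall fun ε (hε : 0 < ε) => ?_)
  have hQ : ∀ z : ι → ℝ, z ⬝ᵥ (B + ε • 1) *ᵥ z = z ⬝ᵥ B *ᵥ z + ε * (z ⬝ᵥ z) := fun z => by
    simp [add_mulVec, smul_mulVec, dotProduct_add]
  have hcube' : ∀ z, |trilin T z z z| ≤ τ * √(z ⬝ᵥ (B + ε • 1) *ᵥ z) ^ 3 := fun z => by
    have hz : 0 ≤ z ⬝ᵥ z := by simpa using dotProduct_star_self_nonneg z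
    rw [hQ]
    exact (hcube z).trans (by gcongr; exact le_add_of_nonneg_right (by positivity))
  simpa only [hQ] using
    abs_trilin_le_of_posDef hT (PosDef.posSemidef_add hB (PosDef.one.smul hε)) hcube' u v

end Polarization

section Frobenius

variable {ι : Type*} [Fintype ι]

lemma sum_sq_dotProduct_orthonormalBasis (b : OrthonormalBasis ι ℝ (EuclideanSpace ℝ ι))
    (x : ι → ℝ) : ∑ r, (x ⬝ᵥ (b r).ofLp) ^ 2 = ∑ i, x i ^ 2 := by
  have := b.sum_sq_inner_left (WithLp.toLp 2 x)
  simpa [EuclideanSpace.inner_eq_star_dotProduct, EuclideanSpace.real_norm_sq_eq,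
    dotProduct_comm] using this

lemma sum_sq_mulVec_orthonormalBasis (X : Matrix ι ι ℝ)
    (b : OrthonormalBasis ι ℝ (EuclideanSpace ℝ ι)) :
    ∑ r, ∑ j, (X *ᵥ (b r).ofLp) j ^ 2 = ∑ j, ∑ k, X j k ^ 2 := by
  rw [sum_comm]
  exact sum_congr rfl fun j _ => sum_sq_dotProduct_orthonormalBasis b (X j)

theorem sum_sq_le_of_abs_dotProduct_mulVec_le [DecidableEq ι] {M B : Matrix ι ι ℝ}
    (hM : M.IsSymm) {c : ℝ} (h : ∀ v, |v ⬝ᵥ M *ᵥ v| ≤ c * (v ⬝ᵥ B *ᵥ v)) :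
    ∑ j, ∑ k, M j k ^ 2 ≤ c ^ 2 * ∑ j, ∑ k, B j k ^ 2 := by
  have hH : M.IsHermitian := isHermitian_iff_isSymm.2 hM
  set b := hH.eigenvectorBasis
  rw [← sum_sq_mulVec_orthonormalBasis M b, ← sum_sq_mulVec_orthonormalBasis B b, mul_sum]
  refine sum_le_sum fun r _ => ?_
  set x := (b r).ofLp
  have hx : ∑ i, x i ^ 2 = 1 := by
    rw [← EuclideanSpace.real_norm_sq_eq, b.orthonormal.1 r, one_pow]
  have hxx : x ⬝ᵥ x = 1 := by rw [← hx]; simp [dotProduct, sq]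
  have hMx : M *ᵥ x = hH.eigenvalues r • x := hH.mulVec_eigenvectorBasis r
  calc ∑ j, (M *ᵥ x) j ^ 2 = (x ⬝ᵥ M *ᵥ x) ^ 2 := by
        rw [hMx, dotProduct_smul, hxx, smul_eq_mul, mul_one]
        simp [mul_pow, ← mul_sum, hx]
    _ ≤ (c * (x ⬝ᵥ B *ᵥ x)) ^ 2 := by
        rw [← sq_abs]; exact pow_le_pow_left₀ (abs_nonneg _) (h x) 2
    _ ≤ c ^ 2 * ∑ j, (B *ᵥ x) j ^ 2 := by
        rw [mul_pow]
        gcongr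
        have hcs := sum_mul_sq_le_sq_mul_sq univ x (B *ᵥ x)
        rwa [hx, one_mul] at hcs

end Frobenius

lemma trace_mul_self_eq_sum_sq {ι : Type*} [Fintype ι] {A : Matrix ι ι ℝ} (hA : A.IsSymm) :
    (A * A).trace = ∑ j, ∑ k, A j k ^ 2 := by
  simp only [Matrix.trace, Matrix.diag_apply, mul_apply, sq]
  exact sum_congr rfl fun j _ => sum_congr rfl fun k _ => by rw [hA.apply j k]

lemma euclNorm_mulVec_eq_sqrt {p : ℕ} {Γ : Matrix (Fin p) (Fin p) ℝ} (hΓ : Γ.IsSymm)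
    (u : Fin p → ℝ) : euclNorm (Γ *ᵥ u) = √(u ⬝ᵥ (Γ ^ 2) *ᵥ u) := by
  rw [euclNorm, sq, ← mulVec_mulVec, dotProduct_mulVec, ← mulVec_transpose, hΓ.eq]
  simp [dotProduct, sq]

/-- If the symmetric 3-tensor `T` satisfies condition (Γ), then
`‖T‖_Fr² ≤ τ² tr(Γ²) tr(Γ⁴)`, where `‖T‖_Fr² = ∑ i j k, (T i j k)²`. -/
theorem tensor_frobenius_bound
    (p : ℕ) (T : Fin p → Fin p → Fin p → ℝ)
    (hsym : ∀ i j k, T i j k = T j i k ∧ T i j k = T i k j)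
    (Γ : Matrix (Fin p) (Fin p) ℝ) (hΓ : Γ.IsSymm) (τ : ℝ) (hτ : 0 < τ)
    (hT : ∀ u : Fin p → ℝ,
      |∑ i, ∑ j, ∑ k, T i j k * u i * u j * u k| ≤ τ * euclNorm (Γ.mulVec u) ^ 3) :
    ∑ i, ∑ j, ∑ k, (T i j k) ^ 2 ≤ τ ^ 2 * (Γ ^ 2).trace * (Γ ^ 4).trace := by
  have hB : (Γ ^ 2).PosSemidef := by
    simpa [sq, conjTranspose_eq_transpose_of_trivial, hΓ.eq] using
      posSemidef_conjTranspose_mul_self Γ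
  have hslice (i : Fin p) (v : Fin p → ℝ) :
      |v ⬝ᵥ of (T i) *ᵥ v| ≤ τ * √((Γ ^ 2) i i) * (v ⬝ᵥ (Γ ^ 2) *ᵥ v) := by
    have := abs_trilin_le_of_posSemidef hsym hB hτ.le
      (fun u => by rw [trilin_eq_sum, ← euclNorm_mulVec_eq_sqrt hΓ]; exact hT u) (Pi.single i 1) v
    simpa [trilin_single_left] using this
  have hfrob (i : Fin p) :
      ∑ j, ∑ k, T i j k ^ 2 ≤ τ ^ 2 * (Γ ^ 2) i i * ∑ j, ∑ k, (Γ ^ 2) j k ^ 2 := by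
    have hsymm : (of (T i)).IsSymm := IsSymm.ext fun j k => (hsym i k j).2
    have := sum_sq_le_of_abs_dotProduct_mulVec_le hsymm (hslice i)
    rwa [mul_pow, Real.sq_sqrt hB.diag_nonneg] at this
  calc ∑ i, ∑ j, ∑ k, T i j k ^ 2
      ≤ ∑ i, τ ^ 2 * (Γ ^ 2) i i * ∑ j, ∑ k, (Γ ^ 2) j k ^ 2 := sum_le_sum fun i _ => hfrob i
    _ = τ ^ 2 * (Γ ^ 2).trace * (Γ ^ 2 * Γ ^ 2).trace := by
      rw [trace_mul_self_eq_sum_sq (hΓ.pow 2), ← sum_mul, ← mul_sum]; rfl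
    _ = τ ^ 2 * (Γ ^ 2).trace * (Γ ^ 4).trace := by rw [← pow_add]
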